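/- Let G be a compact group acting by left translation on C(G), let W be a finite-dimensional translation-invariant closed subspace of C(G), and let k ∈ W. Then for any continuous f : G → ℂ, the convolution f * k lies in W. -/

import Mathlib

/-!
The convolution `f * k` is the `C(G, ℂ)`-valued Bochner integral `∫ f h • λ_h k dμ(h)`
(evaluation at a point commutes with the integral). Its integrand is continuous and takes
values in `W`, which, being finite-dimensional, is complete; so the integral can be computed
inside `W`.
-/

open MeasureTheory

/-- Left translation of a continuous function: `(λ_h k)(g) = k (h⁻¹ * g)`. -/
noncomputable def leftTranslate {G : Type*} [Group G] [TopologicalSpace G] [IsTopologicalGroup G]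
    (γ : G) (f : C(G, ℂ)) : C(G, ℂ) :=
  f.comp ⟨fun g => γ⁻¹ * g, by continuity⟩

lemma continuous_leftTranslate {G : Type*} [Group G] [TopologicalSpace G] [IsTopologicalGroup G]
    (k : C(G, ℂ)) : Continuous fun γ : G => leftTranslate γ k :=
  (ContinuousMap.curry ⟨fun p : G × G => k (p.1⁻¹ * p.2), by fun_prop⟩).continuous

lemma integral_mem_submodule_of_continuous {X E 𝕜 : Type*} [TopologicalSpace X] [CompactSpace X]
    [MeasurableSpace X] [OpensMeasurableSpace X] {μ : Measure X} [IsFiniteMeasure μ]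
    [RCLike 𝕜] [NormedAddCommGroup E] [NormedSpace 𝕜 E] [NormedSpace ℝ E] [CompleteSpace E]
    (W : Submodule 𝕜 E) [CompleteSpace W] {f : X → E} (hf : Continuous f)
    (hfW : ∀ x, f x ∈ W) : ∫ x, f x ∂μ ∈ W := by
  let φ : C(X, W) := ⟨fun x => ⟨f x, hfW x⟩, hf.subtype_mk hfW⟩
  have hφ : Integrable φ μ := φ.continuous.integrable_of_hasCompactSupport
    (HasCompactSupport.of_compactSpace φ)
  have : ∫ x, f x ∂μ = W.subtypeL (∫ x, φ x ∂μ) := W.subtypeL.integral_comp_comm hφ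
  exact this ▸ (∫ x, φ x ∂μ).2

theorem stmt_8_general {G : Type*} [Group G] [TopologicalSpace G] [IsTopologicalGroup G]
    [CompactSpace G] [MeasurableSpace G] [BorelSpace G]
    (μ : Measure G) [IsProbabilityMeasure μ]
    (W : Submodule ℂ C(G, ℂ)) (hW : FiniteDimensional ℂ W)
    (hinv : ∀ (h : G) (w : C(G, ℂ)), w ∈ W → leftTranslate h w ∈ W)
    (k : C(G, ℂ)) (hk : k ∈ W) (f : C(G, ℂ))
    (F : C(G, ℂ)) (hF : ∀ g, F g = ∫ h, f h * k (h⁻¹ * g) ∂μ) :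
    F ∈ W := by
  have hcont : Continuous fun h => f h • leftTranslate h k :=
    f.continuous.smul (continuous_leftTranslate k)
  have hF_eq : F = ∫ h, f h • leftTranslate h k ∂μ := by
    ext g
    rw [hF, ContinuousMap.integral_apply (hcont.integrable_of_hasCompactSupport
      (HasCompactSupport.of_compactSpace _))]
    rfl
  rw [hF_eq]
  exact integral_mem_submodule_of_continuous (𝕜 := ℂ) W hcont
    fun h => W.smul_mem _ (hinv h k hk)

/-- If `W ⊆ C(G)` is a finite-dimensional translation-invariant subspace and `k ∈ W`,
then `f * k ∈ W` for every continuous `f`. -/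
theorem stmt_8 {G : Type*} [Group G] [TopologicalSpace G] [IsTopologicalGroup G]
    [CompactSpace G] [T2Space G] [MeasurableSpace G] [BorelSpace G]
    (μ : Measure G) [μ.IsHaarMeasure] [IsProbabilityMeasure μ]
    (W : Submodule ℂ C(G, ℂ)) (hW : FiniteDimensional ℂ W)
    (hinv : ∀ (h : G) (w : C(G, ℂ)), w ∈ W → leftTranslate h w ∈ W)
    (k : C(G, ℂ)) (hk : k ∈ W) (f : C(G, ℂ))
    (F : C(G, ℂ)) (hF : ∀ g, F g = ∫ h, f h * k (h⁻¹ * g) ∂μ) :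
    F ∈ W :=
  stmt_8_general μ W hW hinv k hk f F hF
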